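/- arXiv:1206.2765 — 2 statements merged into one kernel-verified Lean document; each statement's English description precedes it below -/
import Mathlib

section
/- Let G = ⟨x₁,…,xₙ; r⟩ be a finitely generated group and let L be the subgroup of tame automorphisms of G with respect to (x₁,…,xₙ). Then the index of L in Aut(G) is equal to the number of Nielsen equivalence classes of generating n-tuples in the T-system of (x₁,…,xₙ). -/
def innAut (G : Type*) [Group G] : Subgroup (MulAut G) := (MulAut.conj : G →* MulAut G).range

instance innAut_normal (G : Type*) [Group G] : (innAut G).Normal := by
  constructor
  rintro x ⟨g, rfl⟩ f
  refine ⟨f g, ?_⟩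
  ext h
  simp [MulAut.conj_apply, MulAut.mul_apply, mul_assoc]

abbrev Out (G : Type*) [Group G] := MulAut G ⧸ innAut G

def ResiduallyFinite (G : Type*) [Group G] : Prop :=
  ∀ g : G, g ≠ 1 → ∃ N : Subgroup G, N.Normal ∧ Finite (G ⧸ N) ∧ g ∉ N

noncomputable def expSum (i : Fin 2) : FreeGroup (Fin 2) →* Multiplicative ℤ :=
  FreeGroup.lift (fun j => Multiplicative.ofAdd (if j = i then (1 : ℤ) else 0))

noncomputable def σ (i : Fin 2) (w : FreeGroup (Fin 2)) : ℤ :=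
  Multiplicative.toAdd (expSum i w)

def NielsenEquiv {G : Type*} [Group G] {n : ℕ} (Y Z : Fin n → G) : Prop :=
  ∃ φ : FreeGroup (Fin n) ≃* FreeGroup (Fin n),
    ∀ i, FreeGroup.lift Y (φ (FreeGroup.of i)) = Z i

def SameTSystem {G : Type*} [Group G] {n : ℕ} (Y Z : Fin n → G) : Prop :=
  ∃ ψ : G ≃* G, NielsenEquiv (fun i => ψ (Y i)) Z


section NEaux
variable {G : Type*} [Group G] {n : ℕ}

lemma lift_mulEquiv (ψ : G ≃* G) (Y : Fin n → G) (w : FreeGroup (Fin n)) :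
    FreeGroup.lift (fun i => ψ (Y i)) w = ψ (FreeGroup.lift Y w) := by
  have h : (FreeGroup.lift (fun i => ψ (Y i)) : FreeGroup (Fin n) →* G)
      = (ψ.toMonoidHom.comp (FreeGroup.lift Y)) := by
    apply FreeGroup.ext_hom; intro i; simp
  rw [h]; rfl

lemma ne_refl (Y : Fin n → G) : NielsenEquiv Y Y :=
  ⟨MulEquiv.refl _, fun i => by simp⟩

lemma lift_eq_comp {Y Z : Fin n → G} (α : FreeGroup (Fin n) ≃* FreeGroup (Fin n))
    (hα : ∀ i, FreeGroup.lift Y (α (FreeGroup.of i)) = Z i) :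
    (FreeGroup.lift Z : FreeGroup (Fin n) →* G) = (FreeGroup.lift Y).comp α.toMonoidHom := by
  apply FreeGroup.ext_hom; intro i; simpa using (hα i).symm

lemma ne_symm {Y Z : Fin n → G} (h : NielsenEquiv Y Z) : NielsenEquiv Z Y := by
  obtain ⟨α, hα⟩ := h
  refine ⟨α.symm, fun i => ?_⟩
  rw [lift_eq_comp α hα]
  simp

lemma ne_trans {Y Z W : Fin n → G} (h1 : NielsenEquiv Y Z) (h2 : NielsenEquiv Z W) :
    NielsenEquiv Y W := by
  obtain ⟨α, hα⟩ := h1; obtain ⟨β, hβ⟩ := h2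
  refine ⟨β.trans α, fun i => ?_⟩
  have := hβ i
  rw [lift_eq_comp α hα] at this
  simpa using this

lemma ne_map (ψ : G ≃* G) {Y Z : Fin n → G} (h : NielsenEquiv Y Z) :
    NielsenEquiv (fun i => ψ (Y i)) (fun i => ψ (Z i)) := by
  obtain ⟨α, hα⟩ := h
  exact ⟨α, fun i => by rw [lift_mulEquiv, hα]⟩

end NEaux

theorem statement_2 (n : ℕ) (rels : Set (FreeGroup (Fin n)))
    (L : Subgroup (MulAut (PresentedGroup rels)))
    (hL : ∀ φ : MulAut (PresentedGroup rels), φ ∈ L ↔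
      NielsenEquiv (fun i => φ (PresentedGroup.of i))
        (fun i => (PresentedGroup.of i : PresentedGroup rels))) :
    L.index = Nat.card (Quot (fun (Y Z : {Y : Fin n → PresentedGroup rels //
      SameTSystem (fun i => (PresentedGroup.of i : PresentedGroup rels)) Y}) =>
      NielsenEquiv Y.1 Z.1)) := by
  classical
  set G := PresentedGroup rels
  set x : Fin n → G := fun i => PresentedGroup.of i with hx
  set r : {Y : Fin n → G // SameTSystem x Y} → {Y : Fin n → G // SameTSystem x Y} → Prop :=
    fun Y Z => NielsenEquiv Y.1 Z.1 with hr
  have hequiv : Equivalence r :=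
    ⟨fun Y => ne_refl _, fun h => ne_symm h, fun h1 h2 => ne_trans h1 h2⟩
  -- the map on automorphisms
  have hmem : ∀ φ : MulAut G, SameTSystem x (fun i => φ (x i)) :=
    fun φ => ⟨(φ : G ≃* G), ne_refl _⟩
  set f : MulAut G → Quot r := fun φ => Quot.mk r ⟨fun i => φ (x i), hmem φ⟩ with hf
  -- key: coset relation matches Nielsen equivalence
  have key : ∀ φ φ' : MulAut G, φ⁻¹ * φ' ∈ L ↔
      NielsenEquiv (fun i => φ (x i)) (fun i => φ' (x i)) := by
    intro φ φ'
    rw [hL]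
    have hfun : (fun i => φ ((φ⁻¹ * φ') (x i))) = fun i => φ' (x i) := by
      funext i; simp [MulAut.mul_apply]
    constructor
    · intro h
      have h2 := ne_map (φ : G ≃* G) h
      rw [hfun] at h2
      exact ne_symm h2
    · intro h
      have h2 := ne_map ((φ⁻¹ : MulAut G) : G ≃* G) (ne_symm h)
      have hfun2 : (fun i => φ⁻¹ (φ' (x i))) = fun i => (φ⁻¹ * φ') (x i) := by
        funext i; simp [MulAut.mul_apply]
      rw [hfun2] at h2
      have hfun3 : (fun i => φ⁻¹ (φ (x i))) = x := by
        funext i; simp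
      rw [hfun3] at h2
      exact h2
  have hwd : ∀ φ φ' : MulAut G, (QuotientGroup.leftRel L) φ φ' → f φ = f φ' := by
    intro φ φ' h
    rw [QuotientGroup.leftRel_apply] at h
    exact Quot.sound ((key φ φ').mp h)
  set F : (MulAut G ⧸ L) → Quot r := Quotient.lift f hwd with hF
  have hinj : Function.Injective F := by
    intro a b
    induction a using Quotient.inductionOn with | h φ =>
    induction b using Quotient.inductionOn with | h φ' =>
    intro hab
    have : r ⟨fun i => φ (x i), hmem φ⟩ ⟨fun i => φ' (x i), hmem φ'⟩ := by
      have := (Quot.eq).mp hab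
      exact (hequiv.eqvGen_iff).mp this
    exact Quotient.sound (QuotientGroup.leftRel_apply.mpr ((key φ φ').mpr this))
  have hsurj : Function.Surjective F := by
    intro q
    induction q using Quot.inductionOn with | h Y =>
    obtain ⟨Y, ψ, hψ⟩ := Y
    refine ⟨Quotient.mk'' (ψ), ?_⟩
    show f (ψ) = Quot.mk r ⟨Y, ψ, hψ⟩
    exact Quot.sound hψ
  have : L.index = Nat.card (MulAut G ⧸ L) := rfl
  rw [this]
  exact Nat.card_congr (Equiv.ofBijective F ⟨hinj, hsurj⟩)
end

section
/- In Aut(F(a,b)) modulo Inn(F(a,b)), the subgroup generated by the classes of the automorphisms a ↦ a^{ε₀} b^k, b ↦ b^{ε₁} (for all k ∈ ℤ, ε₀, ε₁ ∈ {±1}) is isomorphic to D_∞ × C₂, where δ: a ↦ ab, b ↦ b has infinite order, α: a ↦ a^{-1}, b ↦ b inverts δ, and ζ: a ↦ a^{-1}, b ↦ b^{-1} is central of order 2. -/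
noncomputable def aF : FreeGroup (Fin 2) := FreeGroup.of 0
noncomputable def bF : FreeGroup (Fin 2) := FreeGroup.of 1

/-- δ : a ↦ ab, b ↦ b, as an automorphism of F(a,b). -/
noncomputable def δhom : FreeGroup (Fin 2) →* FreeGroup (Fin 2) :=
  FreeGroup.lift (fun t => if t = 0 then aF * bF else bF)
noncomputable def δinv : FreeGroup (Fin 2) →* FreeGroup (Fin 2) :=
  FreeGroup.lift (fun t => if t = 0 then aF * bF⁻¹ else bF)
noncomputable def δA : MulAut (FreeGroup (Fin 2)) :=
  MonoidHom.toMulEquiv δhom δinv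
    (by apply FreeGroup.ext_hom; intro t
        fin_cases t <;> simp [δhom, δinv, aF, bF, mul_assoc])
    (by apply FreeGroup.ext_hom; intro t
        fin_cases t <;> simp [δhom, δinv, aF, bF, mul_assoc])

/-- α : a ↦ a⁻¹, b ↦ b, as an automorphism of F(a,b). -/
noncomputable def αhom : FreeGroup (Fin 2) →* FreeGroup (Fin 2) :=
  FreeGroup.lift (fun t => if t = 0 then aF⁻¹ else bF)
noncomputable def αA : MulAut (FreeGroup (Fin 2)) :=
  MonoidHom.toMulEquiv αhom αhom
    (by apply FreeGroup.ext_hom; intro t; fin_cases t <;> simp [αhom, aF, bF])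
    (by apply FreeGroup.ext_hom; intro t; fin_cases t <;> simp [αhom, aF, bF])

/-- ζ : a ↦ a⁻¹, b ↦ b⁻¹, as an automorphism of F(a,b). -/
noncomputable def ζhom : FreeGroup (Fin 2) →* FreeGroup (Fin 2) :=
  FreeGroup.lift (fun t => if t = 0 then aF⁻¹ else bF⁻¹)
noncomputable def ζA : MulAut (FreeGroup (Fin 2)) :=
  MonoidHom.toMulEquiv ζhom ζhom
    (by apply FreeGroup.ext_hom; intro t; fin_cases t <;> simp [ζhom, aF, bF])
    (by apply FreeGroup.ext_hom; intro t; fin_cases t <;> simp [ζhom, aF, bF])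

/-- The subgroup of `Out(F(a,b))` generated by the classes of all automorphisms
of the form a ↦ a^{ε₀}bᵏ, b ↦ b^{ε₁}. -/
noncomputable def SOut : Subgroup (Out (FreeGroup (Fin 2))) :=
  Subgroup.closure {x | ∃ (φ : MulAut (FreeGroup (Fin 2))) (ε₀ ε₁ k : ℤ),
    (ε₀ = 1 ∨ ε₀ = -1) ∧ (ε₁ = 1 ∨ ε₁ = -1) ∧
    φ aF = aF ^ ε₀ * bF ^ k ∧ φ bF = bF ^ ε₁ ∧ x = QuotientGroup.mk φ}

/-!
Modulo inner automorphisms α² = ζ² = 1, αδα = δ⁻¹, and ζ commutes with δ and α, so δ, α, ζ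
define a homomorphism `D∞ × C₂ → Out(F(a,b))`. Its image is `SOut`, since each generator
`a ↦ a^ε₀ b^k, b ↦ b^ε₁` of `SOut` is exactly `ζ^[ε₁ = -1] α^[ε₀ ≠ ε₁] δ^(ε₁ k)` in
`Aut(F(a,b))`. It is injective because exponent sums, which inner automorphisms preserve,
separate the images of `a` and `b` under the representatives of the elements of `D∞ × C₂`.
-/

lemma zmodTwo_ofAdd_one_ne_one : (Multiplicative.ofAdd 1 : Multiplicative (ZMod 2)) ≠ 1 := by
  decide

lemma zmodTwo_eq_one_or_eq_ofAdd_one (c : Multiplicative (ZMod 2)) : c = 1 ∨ c = .ofAdd 1 := by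
  revert c; decide

lemma DihedralGroup.zero_cases (d : DihedralGroup 0) :
    (∃ i : ℤ, d = .r i) ∨ ∃ i : ℤ, d = .sr i := by
  cases d with
  | r i => exact .inl ⟨i, rfl⟩
  | sr i => exact .inr ⟨i, rfl⟩

section Lifts

variable {G : Type*} [Group G]

lemma mul_zpow_eq_zpow_neg_mul {r s : G} (hs : s * s = 1) (hsr : s * r * s = r⁻¹) (i : ℤ) :
    s * r ^ i = r ^ (-i) * s := by
  have hconj : s * r ^ i * s = r ^ (-i) := by
    simpa [MulAut.conj_apply, inv_eq_of_mul_eq_one_right hs, hsr] using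
      map_zpow (MulAut.conj s) r i
  rw [← hconj, mul_assoc, hs, mul_one]

def infDihedralLift (r s : G) (hs : s * s = 1) (hsr : s * r * s = r⁻¹) :
    DihedralGroup 0 →* G where
  toFun
    | .r i => r ^ (show ℤ from i)
    | .sr i => s * r ^ (show ℤ from i)
  map_one' := zpow_zero r
  map_mul' := by
    have key := mul_zpow_eq_zpow_neg_mul hs hsr
    have r_sr (i j : ℤ) : s * r ^ (j - i) = r ^ i * (s * r ^ j) := by
      rw [← mul_assoc, ← neg_neg i, ← key, sub_neg_eq_add, add_comm, zpow_add, mul_assoc]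
    have sr_r (i j : ℤ) : s * r ^ (i + j) = s * r ^ i * r ^ j := by
      rw [zpow_add, mul_assoc]
    have sr_sr (i j : ℤ) : r ^ (j - i) = s * r ^ i * (s * r ^ j) := by
      rw [key, mul_assoc, ← mul_assoc s, hs, one_mul, ← zpow_add, neg_add_eq_sub]
    rintro (i | i) (j | j)
    exacts [zpow_add r i j, r_sr i j, sr_r i j, sr_sr i j]

variable (r s : G) (hs : s * s = 1) (hsr : s * r * s = r⁻¹)

@[simp]
lemma infDihedralLift_r (i : ℤ) : infDihedralLift r s hs hsr (.r i) = r ^ i := rfl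

@[simp]
lemma infDihedralLift_sr (i : ℤ) : infDihedralLift r s hs hsr (.sr i) = s * r ^ i := rfl

@[simp]
lemma infDihedralLift_r_one : infDihedralLift r s hs hsr (.r 1) = r := zpow_one r

@[simp]
lemma infDihedralLift_sr_zero : infDihedralLift r s hs hsr (.sr 0) = s :=
  (congrArg (s * ·) (zpow_zero r)).trans (mul_one s)

def zmodTwoLift (z : G) (hz : z * z = 1) : Multiplicative (ZMod 2) →* G where
  toFun c := if c = 1 then 1 else z
  map_one' := if_pos rfl
  map_mul' := by
    have ofAdd_one_mul_self :
        (Multiplicative.ofAdd 1 : Multiplicative (ZMod 2)) * .ofAdd 1 = 1 := by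
      decide
    intro x y
    rcases zmodTwo_eq_one_or_eq_ofAdd_one x with rfl | rfl <;>
      rcases zmodTwo_eq_one_or_eq_ofAdd_one y with rfl | rfl <;>
      simp [hz, ofAdd_one_mul_self]

@[simp]
lemma zmodTwoLift_ofAdd_one (z : G) (hz : z * z = 1) : zmodTwoLift z hz (.ofAdd 1) = z :=
  if_neg (t := 1) zmodTwo_ofAdd_one_ne_one

def infDihedralProdLift (z : G) (hz : z * z = 1) (hzr : Commute z r) (hzs : Commute z s) :
    DihedralGroup 0 × Multiplicative (ZMod 2) →* G :=
  (infDihedralLift r s hs hsr).noncommCoprod (zmodTwoLift z hz) fun m c => by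
    have hz_m : Commute z (infDihedralLift r s hs hsr m) := by
      cases m with
      | r i => exact hzr.zpow_right _
      | sr i => exact hzs.mul_right (hzr.zpow_right _)
    rcases zmodTwo_eq_one_or_eq_ofAdd_one c with rfl | rfl
    · simp
    · simpa using hz_m.symm

end Lifts

lemma Out.mk_eq_of_eq_conj_mul {G : Type*} [Group G] {φ ψ : MulAut G} (g : G)
    (h : φ = MulAut.conj g * ψ) : (φ : Out G) = ψ := by
  have hg : (MulAut.conj g : Out G) = 1 :=
    (QuotientGroup.eq_one_iff _).2 (MonoidHom.mem_range.2 ⟨g, rfl⟩)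
  rw [h, QuotientGroup.mk_mul, hg, one_mul]

lemma mulAut_ext_aF_bF {φ ψ : MulAut (FreeGroup (Fin 2))} (ha : φ aF = ψ aF)
    (hb : φ bF = ψ bF) : φ = ψ :=
  MulEquiv.toMonoidHom_injective <| FreeGroup.ext_hom _ _ fun i => by fin_cases i; exacts [ha, hb]

@[simp] lemma δA_aF : δA aF = aF * bF := by simp [δA, δhom, aF, bF]
@[simp] lemma δA_bF : δA bF = bF := by simp [δA, δhom, aF, bF]
@[simp] lemma αA_aF : αA aF = aF⁻¹ := by simp [αA, αhom, aF, bF]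
@[simp] lemma αA_bF : αA bF = bF := by simp [αA, αhom, aF, bF]
@[simp] lemma ζA_aF : ζA aF = aF⁻¹ := by simp [ζA, ζhom, aF, bF]
@[simp] lemma ζA_bF : ζA bF = bF⁻¹ := by simp [ζA, ζhom, aF, bF]

@[simp] lemma δA_symm_aF : δA.symm aF = aF * bF⁻¹ := by
  rw [MulEquiv.symm_apply_eq]; simp

@[simp] lemma δA_symm_bF : δA.symm bF = bF := by
  rw [MulEquiv.symm_apply_eq, δA_bF]

@[simp] lemma δA_zpow_bF (n : ℤ) : (δA ^ n) bF = bF := by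
  induction n using Int.induction_on with
  | zero => rfl
  | succ k ih => rw [zpow_add_one, MulAut.mul_apply, δA_bF, ih]
  | pred k ih => rw [zpow_sub_one, MulAut.mul_apply, MulAut.inv_apply, δA_symm_bF, ih]

@[simp] lemma δA_zpow_aF (n : ℤ) : (δA ^ n) aF = aF * bF ^ n := by
  induction n using Int.induction_on with
  | zero => simp
  | succ k ih =>
    rw [zpow_add_one, MulAut.mul_apply, δA_aF, map_mul, ih, δA_zpow_bF, mul_assoc, ← zpow_add_one]
  | pred k ih =>
    rw [zpow_sub_one, MulAut.mul_apply, MulAut.inv_apply, δA_symm_aF, map_mul, map_inv, ih,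
      δA_zpow_bF, mul_assoc, ← zpow_sub_one]

@[simp] lemma σ_mul (i : Fin 2) (v w : FreeGroup (Fin 2)) : σ i (v * w) = σ i v + σ i w := by
  simp [σ]

@[simp] lemma σ_inv (i : Fin 2) (w : FreeGroup (Fin 2)) : σ i w⁻¹ = -σ i w := by
  simp [σ]

@[simp] lemma σ_zpow (i : Fin 2) (w : FreeGroup (Fin 2)) (n : ℤ) :
    σ i (w ^ n) = n * σ i w := by
  simp [σ]

@[simp] lemma σ_aF (i : Fin 2) : σ i aF = if i = 0 then 1 else 0 := by
  fin_cases i <;> simp [σ, expSum, aF]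

@[simp] lemma σ_bF (i : Fin 2) : σ i bF = if i = 1 then 1 else 0 := by
  fin_cases i <;> simp [σ, expSum, bF]

lemma σ_apply_of_mem_innAut {φ : MulAut (FreeGroup (Fin 2))} (hφ : φ ∈ innAut _) (i : Fin 2)
    (w : FreeGroup (Fin 2)) : σ i (φ w) = σ i w := by
  obtain ⟨g, rfl⟩ := MonoidHom.mem_range.1 hφ
  simp [MulAut.conj_apply]

lemma αA_mul_self : αA * αA = 1 := mulAut_ext_aF_bF (by simp) (by simp)

lemma ζA_mul_self : ζA * ζA = 1 := mulAut_ext_aF_bF (by simp) (by simp)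

lemma αA_mul_δA_mul_αA : αA * δA * αA = MulAut.conj bF⁻¹ * δA⁻¹ :=
  mulAut_ext_aF_bF (by simp [mul_assoc]) (by simp)

lemma ζA_mul_δA : ζA * δA = MulAut.conj bF * (δA * ζA) :=
  mulAut_ext_aF_bF (by simp [MulAut.conj_apply]) (by simp [MulAut.conj_apply])

lemma ζA_mul_αA : ζA * αA = αA * ζA := mulAut_ext_aF_bF (by simp) (by simp)

noncomputable def outHom : DihedralGroup 0 × Multiplicative (ZMod 2) →* Out (FreeGroup (Fin 2)) :=
  infDihedralProdLift (QuotientGroup.mk δA) (QuotientGroup.mk αA)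
    (by rw [← QuotientGroup.mk_mul, αA_mul_self, QuotientGroup.mk_one])
    (by rw [← QuotientGroup.mk_mul, ← QuotientGroup.mk_mul, ← QuotientGroup.mk_inv,
      Out.mk_eq_of_eq_conj_mul _ αA_mul_δA_mul_αA])
    (QuotientGroup.mk ζA)
    (by rw [← QuotientGroup.mk_mul, ζA_mul_self, QuotientGroup.mk_one])
    (by rw [Commute, SemiconjBy, ← QuotientGroup.mk_mul, ← QuotientGroup.mk_mul,
      Out.mk_eq_of_eq_conj_mul _ ζA_mul_δA])
    (by rw [Commute, SemiconjBy, ← QuotientGroup.mk_mul, ← QuotientGroup.mk_mul, ζA_mul_αA])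

lemma outHom_injective : Function.Injective outHom := by
  rw [injective_iff_map_eq_one]
  rintro ⟨d, c⟩ h
  rcases zmodTwo_eq_one_or_eq_ofAdd_one c with rfl | rfl <;>
    rcases DihedralGroup.zero_cases d with ⟨n, rfl⟩ | ⟨n, rfl⟩ <;>
    simp only [outHom, infDihedralProdLift, MonoidHom.noncommCoprod_apply, infDihedralLift_r,
      infDihedralLift_sr, zmodTwoLift_ofAdd_one, map_one, mul_one, ← QuotientGroup.mk_zpow,
      ← QuotientGroup.mk_mul, QuotientGroup.eq_one_iff] at h
  -- Only the case `(r n, 1)` survives the exponent-sum comparison, and there `n = 0`.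
  all_goals
    have h0 := σ_apply_of_mem_innAut h 0 aF
    have h1 := σ_apply_of_mem_innAut h 1 aF
    have h2 := σ_apply_of_mem_innAut h 1 bF
    simp at h0 h1 h2
  rw [h1]
  rfl

lemma range_outHom_le : outHom.range ≤ SOut := by
  have hδ : (QuotientGroup.mk δA : Out _) ∈ SOut :=
    Subgroup.subset_closure ⟨δA, 1, 1, 1, by simp, by simp, by simp, by simp, rfl⟩
  have hα : (QuotientGroup.mk αA : Out _) ∈ SOut :=
    Subgroup.subset_closure ⟨αA, -1, 1, 0, by simp, by simp, by simp, by simp, rfl⟩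
  have hζ : (QuotientGroup.mk ζA : Out _) ∈ SOut :=
    Subgroup.subset_closure ⟨ζA, -1, -1, 0, by simp, by simp, by simp, by simp, rfl⟩
  rintro _ ⟨⟨d, c⟩, rfl⟩
  refine mul_mem ?_ ?_
  · rcases DihedralGroup.zero_cases d with ⟨n, rfl⟩ | ⟨n, rfl⟩
    · exact zpow_mem hδ n
    · exact mul_mem hα (zpow_mem hδ n)
  · rcases zmodTwo_eq_one_or_eq_ofAdd_one c with rfl | rfl
    · exact one_mem _
    · simpa [outHom, infDihedralProdLift] using hζ

lemma le_range_outHom : SOut ≤ outHom.range := by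
  rw [SOut, Subgroup.closure_le]
  rintro _ ⟨φ, ε₀, ε₁, k, rfl | rfl, rfl | rfl, ha, hb, rfl⟩
  · refine ⟨(.r k, 1), ?_⟩
    rw [show φ = δA ^ k from mulAut_ext_aF_bF (by simp [ha]) (by simp [hb])]
    simp [outHom, infDihedralProdLift]
  · refine ⟨(.sr (-k), .ofAdd 1), ?_⟩
    rw [show φ = ζA * αA * δA ^ (-k) from
      mulAut_ext_aF_bF (by simp [-zpow_neg, ha]) (by simp [-zpow_neg, zpow_neg_one, hb])]
    rw [outHom, infDihedralProdLift, MonoidHom.noncommCoprod_apply']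
    simp [mul_assoc]
  · refine ⟨(.sr k, 1), ?_⟩
    rw [show φ = αA * δA ^ k from mulAut_ext_aF_bF (by simp [ha]) (by simp [hb])]
    simp [outHom, infDihedralProdLift]
  · refine ⟨(.r (-k), .ofAdd 1), ?_⟩
    rw [show φ = ζA * δA ^ (-k) from
      mulAut_ext_aF_bF (by simp [-zpow_neg, zpow_neg_one, ha])
        (by simp [-zpow_neg, zpow_neg_one, hb])]
    rw [outHom, infDihedralProdLift, MonoidHom.noncommCoprod_apply']
    simp

noncomputable def outHomEquiv : DihedralGroup 0 × Multiplicative (ZMod 2) ≃* SOut :=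
  (MonoidHom.ofInjective outHom_injective).trans
    (MulEquiv.subgroupCongr (range_outHom_le.antisymm le_range_outHom))

@[simp]
lemma coe_outHomEquiv (x : DihedralGroup 0 × Multiplicative (ZMod 2)) :
    (outHomEquiv x : Out (FreeGroup (Fin 2))) = outHom x := rfl

theorem statement_11 :
    ∃ e : SOut ≃* DihedralGroup 0 × Multiplicative (ZMod 2),
      (∀ h : (QuotientGroup.mk δA : Out (FreeGroup (Fin 2))) ∈ SOut,
        e ⟨_, h⟩ = (DihedralGroup.r 1, 1)) ∧
      (∀ h : (QuotientGroup.mk αA : Out (FreeGroup (Fin 2))) ∈ SOut,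
        e ⟨_, h⟩ = (DihedralGroup.sr 0, 1)) ∧
      (∀ h : (QuotientGroup.mk ζA : Out (FreeGroup (Fin 2))) ∈ SOut,
        e ⟨_, h⟩ = (1, Multiplicative.ofAdd 1)) := by
  refine ⟨outHomEquiv.symm, ?_, ?_, ?_⟩ <;>
  · intro h
    rw [MulEquiv.symm_apply_eq]
    exact Subtype.ext (by simp [outHom, infDihedralProdLift])
end
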